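/- Let C be a one-weight Z₂Z₂[u]-linear code of weight m and let v = (a|b) ∈ C with a ∈ Z₂^r, b ∈ R^s. Then the number of coordinates of b that are units of R (i.e., equal to 1 or 1+u) is either 0 or m/2. -/
import Mathlib


open TrivSqZeroExt Polynomial

/-- The four element ring `R = ℤ₂ + u ℤ₂` with `u ^ 2 = 0`, realized as the
dual numbers over `ZMod 2`; the element `u` is `DualNumber.eps`. -/
abbrev Ru : Type := DualNumber (ZMod 2)

instance : Fintype Ru := inferInstanceAs (Fintype (ZMod 2 × ZMod 2))
instance : DecidableEq Ru := inferInstanceAs (DecidableEq (ZMod 2 × ZMod 2))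

/-- The ring homomorphism `η : R → ℤ₂`, `η (p + u q) = p`. -/
noncomputable def eta : Ru →+* ZMod 2 :=
  (TrivSqZeroExt.fstHom (ZMod 2) (ZMod 2) (ZMod 2)).toRingHom

/-- The `R`-module structure on `ℤ₂ʳ × Rˢ`:
`d • (a, b) = (η d * a, d * b)` componentwise. -/
noncomputable instance modM (r s : ℕ) :
    Module Ru ((Fin r → ZMod 2) × (Fin s → Ru)) :=
  letI m1 : Module Ru (ZMod 2) := Module.compHom (ZMod 2) eta
  letI m2 : Module Ru (Fin r → ZMod 2) :=
    @Pi.module (Fin r) (fun _ => ZMod 2) Ru _ _ (fun _ => m1)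
  letI m3 : Module Ru (Fin s → Ru) :=
    @Pi.module (Fin s) (fun _ => Ru) Ru _ _ (fun _ => Semiring.toModule)
  @Prod.instModule _ _ _ _ _ _ m2 m3

/-- Lee weight on `R`: `wt_L 0 = 0`, `wt_L 1 = 1`, `wt_L u = 2`, `wt_L (1+u) = 1`. -/
def leeWt (x : Ru) : ℕ :=
  if TrivSqZeroExt.fst x ≠ 0 then 1 else if TrivSqZeroExt.snd x ≠ 0 then 2 else 0

/-- The weight: Hamming weight on the `ℤ₂`-part plus Lee weight on the `R`-part. -/
def wt {r s : ℕ} (v : (Fin r → ZMod 2) × (Fin s → Ru)) : ℕ :=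
  hammingNorm v.1 + ∑ j, leeWt (v.2 j)

/-- The Gray map `Φ(x, p + u q) = (x, q, p + q)` (componentwise). -/
def gray {r s : ℕ} (v : (Fin r → ZMod 2) × (Fin s → Ru)) :
    Fin (r + 2*s) → ZMod 2 :=
  fun i =>
    Fin.append (Fin.append v.1 (fun j => TrivSqZeroExt.snd (v.2 j)))
      (fun j => TrivSqZeroExt.fst (v.2 j) + TrivSqZeroExt.snd (v.2 j))
      (Fin.cast (by omega) i)

/-- The inner product `⟨v, w⟩ = u·Σ aᵢdᵢ + Σ bⱼeⱼ ∈ R`. -/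
noncomputable def innerP {r s : ℕ} (v w : (Fin r → ZMod 2) × (Fin s → Ru)) : Ru :=
  DualNumber.eps * TrivSqZeroExt.inl (∑ i, v.1 i * w.1 i) + ∑ j, v.2 j * w.2 j

/-- The simultaneous cyclic shift of both blocks. -/
def shiftT {r s : ℕ} (v : (Fin r → ZMod 2) × (Fin s → Ru)) :
    (Fin r → ZMod 2) × (Fin s → Ru) :=
  (fun i => v.1 ⟨(i.val + (r - 1)) % r, Nat.mod_lt _ i.pos⟩,
   fun j => v.2 ⟨(j.val + (s - 1)) % s, Nat.mod_lt _ j.pos⟩)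

/-- The codeword of `ℤ₂ʳ × Rˢ` corresponding to `(l(x), g(x) + u·a(x))`. -/
noncomputable def genword (r s : ℕ) (l g a : Polynomial (ZMod 2)) :
    (Fin r → ZMod 2) × (Fin s → Ru) :=
  (fun i => l.coeff i,
   fun j => TrivSqZeroExt.inl (g.coeff j) + DualNumber.eps * TrivSqZeroExt.inl (a.coeff j))

/-- The cyclic code generated by `(l(x), g(x) + u·a(x))`: the `R`-span of all
simultaneous cyclic shifts of the corresponding codeword. -/
noncomputable def cycCode (r s : ℕ) (l g a : Polynomial (ZMod 2)) :
    Submodule Ru ((Fin r → ZMod 2) × (Fin s → Ru)) :=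
  Submodule.span Ru {v | ∃ k : ℕ, v = shiftT^[k] (genword r s l g a)}

/-- The `γ`-fold replication map `(v_r, v_s) ↦ (v_r, …, v_r, v_s, …, v_s)`. -/
def repMap (γ : ℕ) {r s : ℕ} (v : (Fin r → ZMod 2) × (Fin s → Ru)) :
    (Fin (γ * r) → ZMod 2) × (Fin (γ * s) → Ru) :=
  (fun i => v.1 ⟨i.val % r, Nat.mod_lt _ (by
      rcases Nat.eq_zero_or_pos r with h | h
      · exact absurd i.isLt (by simp [h])
      · exact h)⟩,
   fun j => v.2 ⟨j.val % s, Nat.mod_lt _ (by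
      rcases Nat.eq_zero_or_pos s with h | h
      · exact absurd j.isLt (by simp [h])
      · exact h)⟩)

set_option synthInstance.maxHeartbeats 1000000 in
lemma smul_def' {r s : ℕ} (d : Ru) (v : (Fin r → ZMod 2) × (Fin s → Ru)) :
    d • v = (fun i => eta d * v.1 i, fun j => d * v.2 j) := rfl

lemma unit_iff : ∀ x : Ru, (TrivSqZeroExt.fst x ≠ 0) ↔ (x = 1 ∨ x = 1 + DualNumber.eps) := by
  decide

lemma eps_mul_fst (x : Ru) : TrivSqZeroExt.fst (DualNumber.eps * x) = 0 := by
  simp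

lemma eps_mul_snd (x : Ru) : TrivSqZeroExt.snd (DualNumber.eps * x) = TrivSqZeroExt.fst x := by
  simp

set_option synthInstance.maxHeartbeats 1000000 in
/-- in a one-weight code of weight `m`, the number of coordinates of
the `R`-part of any codeword that are units (`1` or `1+u`) is either `0` or `m/2`. -/
theorem unit_coordinates_count (r s : ℕ)
    (C : Submodule Ru ((Fin r → ZMod 2) × (Fin s → Ru))) (m : ℕ)
    (hone : ∀ c ∈ C, c ≠ 0 → wt c = m)
    (v : (Fin r → ZMod 2) × (Fin s → Ru)) (hv : v ∈ C) :
    (Finset.univ.filter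
        (fun j : Fin s => v.2 j = 1 ∨ v.2 j = 1 + DualNumber.eps)).card = 0 ∨
    2 * (Finset.univ.filter
        (fun j : Fin s => v.2 j = 1 ∨ v.2 j = 1 + DualNumber.eps)).card = m := by
  classical
  set p : Fin s → Prop := fun j => v.2 j = 1 ∨ v.2 j = 1 + DualNumber.eps with hp
  rcases Nat.eq_zero_or_pos (Finset.univ.filter p).card with h0 | hpos
  · exact Or.inl h0
  right
  set w : (Fin r → ZMod 2) × (Fin s → Ru) := (DualNumber.eps : Ru) • v with hw
  have hwC : w ∈ C := C.smul_mem _ hv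
  have hw1 : w.1 = 0 := by
    funext i
    have : w.1 i = eta DualNumber.eps * v.1 i := by rw [hw, smul_def']
    rw [this]
    have : eta DualNumber.eps = 0 := rfl
    rw [this, zero_mul]; rfl
  have hw2 : ∀ j, w.2 j = DualNumber.eps * v.2 j := by
    intro j; rw [hw, smul_def']
  have hlee : ∀ j, leeWt (w.2 j) = if p j then 2 else 0 := by
    intro j
    rw [hw2 j]
    unfold leeWt
    rw [eps_mul_fst, eps_mul_snd]
    simp only [ne_eq, not_true_eq_false, if_false, not_not]
    by_cases h : p j
    · rw [if_pos h, if_pos]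
      exact (unit_iff (v.2 j)).mpr h
    · rw [if_neg h, if_neg]
      intro hne
      exact h ((unit_iff (v.2 j)).mp hne)
  have hwt : wt w = 2 * (Finset.univ.filter p).card := by
    unfold wt
    rw [hw1]
    simp only [hammingNorm_zero, zero_add]
    calc ∑ j, leeWt (w.2 j) = ∑ j, if p j then 2 else 0 := by
          exact Finset.sum_congr rfl fun j _ => hlee j
      _ = ∑ j ∈ Finset.univ.filter p, 2 := (Finset.sum_filter _ _).symm
      _ = 2 * (Finset.univ.filter p).card := by
          rw [Finset.sum_const, smul_eq_mul, mul_comm]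
  have hwne : w ≠ 0 := by
    obtain ⟨j, hj⟩ := Finset.card_pos.mp hpos
    have hpj : p j := (Finset.mem_filter.mp hj).2
    intro h
    have : leeWt (w.2 j) = 0 := by rw [h]; rfl
    rw [hlee j, if_pos hpj] at this
    exact two_ne_zero this
  rw [← hwt]
  exact hone w hwC hwne
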